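/- arXiv:1810.05575 — 3 statements merged into one kernel-verified Lean document; each statement's English description precedes it below -/
import Mathlib

section
/- Let R = ℚ[x₁,…,xₘ, y₁,…,yₙ] and suppose I₁ ⊆ ℚ[x₁,…,xₘ] and I₂ ⊆ ℚ[y₁,…,yₙ] are ideals in disjoint sets of variables. Let I ⊆ R be the ideal generated by (generators of) I₁ and I₂ together. Then for any variable x_ℓ among the x's, the elimination ideal I ∩ ℚ[x₁,…,x_{ℓ-1},x_{ℓ+1},…,xₘ,y₁,…,yₙ] equals the sum of the elimination ideal I₁ ∩ ℚ[x₁,…,x_{ℓ-1},x_{ℓ+1},…,xₘ] (extended to R) and I₂ (extended to R). -/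
open MvPolynomial TensorProduct

set_option synthInstance.maxHeartbeats 1000000
set_option maxHeartbeats 1000000

noncomputable section EliminationAux

variable (σ τ : Type*)

/-- `ℚ[σ ⊔ τ] ≃ ℚ[σ] ⊗ ℚ[τ]`. -/
noncomputable def sumTensorEquiv :
    MvPolynomial (σ ⊕ τ) ℚ ≃ₐ[ℚ] MvPolynomial σ ℚ ⊗[ℚ] MvPolynomial τ ℚ :=
  AlgEquiv.ofAlgHom
    (aeval (Sum.elim (fun i => (X i : MvPolynomial σ ℚ) ⊗ₜ[ℚ] 1)
      (fun j => (1 : MvPolynomial σ ℚ) ⊗ₜ[ℚ] X j)))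
    (Algebra.TensorProduct.lift (rename Sum.inl) (rename Sum.inr) (fun a b => Commute.all _ _))
    (by ext i <;> simp)
    (by ext (i|j) <;> simp)

lemma sumTensorEquiv_symm_comp_inl :
    ((sumTensorEquiv σ τ).symm.toAlgHom.comp
      (Algebra.TensorProduct.includeLeft :
        MvPolynomial σ ℚ →ₐ[ℚ] MvPolynomial σ ℚ ⊗[ℚ] MvPolynomial τ ℚ)) =
    (rename Sum.inl : MvPolynomial σ ℚ →ₐ[ℚ] MvPolynomial (σ ⊕ τ) ℚ) := by
  ext i
  simp [sumTensorEquiv]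

lemma sumTensorEquiv_symm_comp_inr :
    ((sumTensorEquiv σ τ).symm.toAlgHom.comp
      (Algebra.TensorProduct.includeRight :
        MvPolynomial τ ℚ →ₐ[ℚ] MvPolynomial σ ℚ ⊗[ℚ] MvPolynomial τ ℚ)) =
    (rename Sum.inr : MvPolynomial τ ℚ →ₐ[ℚ] MvPolynomial (σ ⊕ τ) ℚ) := by
  ext j
  simp [sumTensorEquiv]


lemma comap_toRingHom_eq {R S : Type*} [CommRing R] [CommRing S] (f : R ≃+* S) (J : Ideal S) :
    Ideal.comap f.toRingHom J = Ideal.map f.symm.toRingHom J := by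
  apply le_antisymm
  · intro x hx
    rw [show x = f.symm (f x) from (f.symm_apply_apply x).symm]
    exact Ideal.mem_map_of_mem _ hx
  · rw [Ideal.map_le_iff_le_comap]
    intro y hy
    have : f (f.symm y) ∈ J := by rw [f.apply_symm_apply]; exact hy
    exact this

/-- The map `ℚ[σ ⊔ τ] → (ℚ[σ]/I₁) ⊗ (ℚ[τ]/I₂)`. -/
noncomputable def psi (I₁ : Ideal (MvPolynomial σ ℚ)) (I₂ : Ideal (MvPolynomial τ ℚ)) :
    MvPolynomial (σ ⊕ τ) ℚ →ₐ[ℚ]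
      (MvPolynomial σ ℚ ⧸ I₁) ⊗[ℚ] (MvPolynomial τ ℚ ⧸ I₂) :=
  (Algebra.TensorProduct.map (Ideal.Quotient.mkₐ ℚ I₁) (Ideal.Quotient.mkₐ ℚ I₂)).comp
    (sumTensorEquiv σ τ).toAlgHom

lemma ker_psi (I₁ : Ideal (MvPolynomial σ ℚ)) (I₂ : Ideal (MvPolynomial τ ℚ)) :
    RingHom.ker (psi σ τ I₁ I₂) =
      Ideal.map (rename (Sum.inl : σ → σ ⊕ τ) :
          MvPolynomial σ ℚ →ₐ[ℚ] MvPolynomial (σ ⊕ τ) ℚ).toRingHom I₁ ⊔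
      Ideal.map (rename (Sum.inr : τ → σ ⊕ τ) :
          MvPolynomial τ ℚ →ₐ[ℚ] MvPolynomial (σ ⊕ τ) ℚ).toRingHom I₂ := by
  have h := Algebra.TensorProduct.map_ker (Ideal.Quotient.mkₐ ℚ I₁) (Ideal.Quotient.mkₐ ℚ I₂)
    (Ideal.Quotient.mkₐ_surjective ℚ I₁) (Ideal.Quotient.mkₐ_surjective ℚ I₂)
  rw [show RingHom.ker (Ideal.Quotient.mkₐ ℚ I₁) = I₁ from Ideal.Quotient.mkₐ_ker ℚ I₁,
    show RingHom.ker (Ideal.Quotient.mkₐ ℚ I₂) = I₂ from Ideal.Quotient.mkₐ_ker ℚ I₂] at h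
  set e := (sumTensorEquiv σ τ).toRingEquiv with he
  have key : RingHom.ker (psi σ τ I₁ I₂) =
      Ideal.comap e.toRingHom
        (RingHom.ker (Algebra.TensorProduct.map (Ideal.Quotient.mkₐ ℚ I₁)
          (Ideal.Quotient.mkₐ ℚ I₂))) := rfl
  rw [key, h, comap_toRingHom_eq, Ideal.map_sup]
  have hl : Ideal.map (Algebra.TensorProduct.includeLeft :
      MvPolynomial σ ℚ →ₐ[ℚ] MvPolynomial σ ℚ ⊗[ℚ] MvPolynomial τ ℚ) I₁ =
      Ideal.map (Algebra.TensorProduct.includeLeft :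
        MvPolynomial σ ℚ →ₐ[ℚ] MvPolynomial σ ℚ ⊗[ℚ] MvPolynomial τ ℚ).toRingHom I₁ := rfl
  have hr : Ideal.map (Algebra.TensorProduct.includeRight :
      MvPolynomial τ ℚ →ₐ[ℚ] MvPolynomial σ ℚ ⊗[ℚ] MvPolynomial τ ℚ) I₂ =
      Ideal.map (Algebra.TensorProduct.includeRight :
        MvPolynomial τ ℚ →ₐ[ℚ] MvPolynomial σ ℚ ⊗[ℚ] MvPolynomial τ ℚ).toRingHom I₂ := rfl
  rw [hl, hr, Ideal.map_map, Ideal.map_map]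
  congr 1
  · congr 1
    exact congrArg AlgHom.toRingHom (sumTensorEquiv_symm_comp_inl σ τ)
  · congr 1
    exact congrArg AlgHom.toRingHom (sumTensorEquiv_symm_comp_inr σ τ)


lemma psi_X_inl {σ τ : Type*} (I₁ : Ideal (MvPolynomial σ ℚ)) (I₂ : Ideal (MvPolynomial τ ℚ))
    (i : σ) :
    psi σ τ I₁ I₂ (X (Sum.inl i)) = Ideal.Quotient.mk I₁ (X i) ⊗ₜ[ℚ] 1 := by
  simp [psi, sumTensorEquiv]

lemma psi_X_inr {σ τ : Type*} (I₁ : Ideal (MvPolynomial σ ℚ)) (I₂ : Ideal (MvPolynomial τ ℚ))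
    (j : τ) :
    psi σ τ I₁ I₂ (X (Sum.inr j)) = 1 ⊗ₜ[ℚ] Ideal.Quotient.mk I₂ (X j) := by
  simp [psi, sumTensorEquiv]

lemma tensor_map_injective {M N P : Type*} [CommRing M] [CommRing N] [CommRing P]
    [Algebra ℚ M] [Algebra ℚ N] [Algebra ℚ P] (f : M →ₐ[ℚ] N) (hf : Function.Injective f) :
    Function.Injective (Algebra.TensorProduct.map f (AlgHom.id ℚ P)) := by
  have h : (Algebra.TensorProduct.map f (AlgHom.id ℚ P)).toLinearMap
      = LinearMap.rTensor P f.toLinearMap := TensorProduct.ext' (fun a b => rfl)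
  have h2 := Module.Flat.rTensor_preserves_injective_linearMap (M := P) f.toLinearMap hf
  intro x y hxy
  apply h2
  rw [← LinearMap.congr_fun h x, ← LinearMap.congr_fun h y]
  exact hxy

theorem stmt2' {m n : ℕ} (I₁ : Ideal (MvPolynomial (Fin m) ℚ))
    (I₂ : Ideal (MvPolynomial (Fin n) ℚ)) (ℓ : Fin m)
    (I : Ideal (MvPolynomial (Fin m ⊕ Fin n) ℚ))
    (hI : I =
      Ideal.map (rename (Sum.inl : Fin m → Fin m ⊕ Fin n) :
          MvPolynomial (Fin m) ℚ →ₐ[ℚ] MvPolynomial (Fin m ⊕ Fin n) ℚ).toRingHom I₁ ⊔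
      Ideal.map (rename (Sum.inr : Fin n → Fin m ⊕ Fin n) :
          MvPolynomial (Fin n) ℚ →ₐ[ℚ] MvPolynomial (Fin m ⊕ Fin n) ℚ).toRingHom I₂) :
    Ideal.comap
        (rename (Sum.map (Subtype.val : {i : Fin m // i ≠ ℓ} → Fin m) (id : Fin n → Fin n)) :
          MvPolynomial ({i : Fin m // i ≠ ℓ} ⊕ Fin n) ℚ →ₐ[ℚ]
            MvPolynomial (Fin m ⊕ Fin n) ℚ).toRingHom I =
      Ideal.map (rename (Sum.inl : {i : Fin m // i ≠ ℓ} → {i : Fin m // i ≠ ℓ} ⊕ Fin n) :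
          MvPolynomial {i : Fin m // i ≠ ℓ} ℚ →ₐ[ℚ]
            MvPolynomial ({i : Fin m // i ≠ ℓ} ⊕ Fin n) ℚ).toRingHom
        (Ideal.comap (rename (Subtype.val : {i : Fin m // i ≠ ℓ} → Fin m) :
            MvPolynomial {i : Fin m // i ≠ ℓ} ℚ →ₐ[ℚ] MvPolynomial (Fin m) ℚ).toRingHom I₁) ⊔
      Ideal.map (rename (Sum.inr : Fin n → {i : Fin m // i ≠ ℓ} ⊕ Fin n) :
          MvPolynomial (Fin n) ℚ →ₐ[ℚ]
            MvPolynomial ({i : Fin m // i ≠ ℓ} ⊕ Fin n) ℚ).toRingHom I₂ := by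
  classical
  set J₁ : Ideal (MvPolynomial {i : Fin m // i ≠ ℓ} ℚ) :=
    Ideal.comap (rename (Subtype.val : {i : Fin m // i ≠ ℓ} → Fin m) :
      MvPolynomial {i : Fin m // i ≠ ℓ} ℚ →ₐ[ℚ] MvPolynomial (Fin m) ℚ).toRingHom I₁ with hJ₁
  set φ : MvPolynomial ({i : Fin m // i ≠ ℓ} ⊕ Fin n) ℚ →ₐ[ℚ] MvPolynomial (Fin m ⊕ Fin n) ℚ :=
    (rename (Sum.map (Subtype.val : {i : Fin m // i ≠ ℓ} → Fin m) (id : Fin n → Fin n))) with hφ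
  have hIker : I = RingHom.ker (psi (Fin m) (Fin n) I₁ I₂) := by rw [hI, ker_psi]
  have hle : J₁ ≤ Ideal.comap ((rename (Subtype.val : {i : Fin m // i ≠ ℓ} → Fin m) :
      MvPolynomial {i : Fin m // i ≠ ℓ} ℚ →ₐ[ℚ] MvPolynomial (Fin m) ℚ) :
        MvPolynomial {i : Fin m // i ≠ ℓ} ℚ →+* MvPolynomial (Fin m) ℚ) I₁ := le_rfl
  set ι : (MvPolynomial {i : Fin m // i ≠ ℓ} ℚ ⧸ J₁) →ₐ[ℚ] (MvPolynomial (Fin m) ℚ ⧸ I₁) :=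
    Ideal.quotientMapₐ I₁ (rename (Subtype.val : {i : Fin m // i ≠ ℓ} → Fin m)) hle with hι
  have hinj : Function.Injective ι := Ideal.quotientMap_injective' (H := hle) hle
  have hcomm : (psi (Fin m) (Fin n) I₁ I₂).comp φ =
      (Algebra.TensorProduct.map ι (AlgHom.id ℚ (MvPolynomial (Fin n) ℚ ⧸ I₂))).comp
        (psi {i : Fin m // i ≠ ℓ} (Fin n) J₁ I₂) := by
    ext (i|j) <;>
      simp [hφ, psi_X_inl, psi_X_inr, hι, Ideal.quotientMapₐ, Ideal.quotientMap_mk]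
  have step1 : Ideal.comap φ.toRingHom I =
      RingHom.ker ((psi (Fin m) (Fin n) I₁ I₂).comp φ) := by
    rw [hIker]
    exact RingHom.comap_ker _ _
  rw [step1, hcomm]
  have step2 : RingHom.ker ((Algebra.TensorProduct.map ι
        (AlgHom.id ℚ (MvPolynomial (Fin n) ℚ ⧸ I₂))).comp
        (psi {i : Fin m // i ≠ ℓ} (Fin n) J₁ I₂)) =
      RingHom.ker (psi {i : Fin m // i ≠ ℓ} (Fin n) J₁ I₂) := by
    rw [← AlgHom.comap_ker]
    have : RingHom.ker (Algebra.TensorProduct.map ι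
        (AlgHom.id ℚ (MvPolynomial (Fin n) ℚ ⧸ I₂))) = ⊥ := by
      ext x
      simp only [RingHom.mem_ker, Ideal.mem_bot]
      refine ⟨fun hx => tensor_map_injective ι hinj ?_, fun hx => by rw [hx, map_zero]⟩
      rw [hx, map_zero]
    rw [this]
    rfl
  rw [step2, ker_psi]

end EliminationAux


open MvPolynomial

/-- Let `I₁ ⊆ ℚ[x₁,…,xₘ]` and `I₂ ⊆ ℚ[y₁,…,yₙ]` be ideals in disjoint sets of
variables, and let `I` be the ideal of `R = ℚ[x,y]` generated by (the images of)
`I₁` and `I₂`.  Then for any variable `x_ℓ`, the elimination ideal of `I` obtained by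
eliminating `x_ℓ` (realized as the contraction of `I` to the polynomial ring in the
remaining variables) equals the sum of the elimination ideal `I₁ ∩ ℚ[x ∖ {x_ℓ}]`
(extended) and `I₂` (extended). -/
theorem stmt2 {m n : ℕ} (I₁ : Ideal (MvPolynomial (Fin m) ℚ))
    (I₂ : Ideal (MvPolynomial (Fin n) ℚ)) (ℓ : Fin m)
    (I : Ideal (MvPolynomial (Fin m ⊕ Fin n) ℚ))
    (hI : I =
      Ideal.map (rename (Sum.inl : Fin m → Fin m ⊕ Fin n) :
          MvPolynomial (Fin m) ℚ →ₐ[ℚ] MvPolynomial (Fin m ⊕ Fin n) ℚ).toRingHom I₁ ⊔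
      Ideal.map (rename (Sum.inr : Fin n → Fin m ⊕ Fin n) :
          MvPolynomial (Fin n) ℚ →ₐ[ℚ] MvPolynomial (Fin m ⊕ Fin n) ℚ).toRingHom I₂) :
    Ideal.comap
        (rename (Sum.map (Subtype.val : {i : Fin m // i ≠ ℓ} → Fin m) (id : Fin n → Fin n)) :
          MvPolynomial ({i : Fin m // i ≠ ℓ} ⊕ Fin n) ℚ →ₐ[ℚ]
            MvPolynomial (Fin m ⊕ Fin n) ℚ).toRingHom I =
      Ideal.map (rename (Sum.inl : {i : Fin m // i ≠ ℓ} → {i : Fin m // i ≠ ℓ} ⊕ Fin n) :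
          MvPolynomial {i : Fin m // i ≠ ℓ} ℚ →ₐ[ℚ]
            MvPolynomial ({i : Fin m // i ≠ ℓ} ⊕ Fin n) ℚ).toRingHom
        (Ideal.comap (rename (Subtype.val : {i : Fin m // i ≠ ℓ} → Fin m) :
            MvPolynomial {i : Fin m // i ≠ ℓ} ℚ →ₐ[ℚ] MvPolynomial (Fin m) ℚ).toRingHom I₁) ⊔
      Ideal.map (rename (Sum.inr : Fin n → {i : Fin m // i ≠ ℓ} ⊕ Fin n) :
          MvPolynomial (Fin n) ℚ →ₐ[ℚ]
            MvPolynomial ({i : Fin m // i ≠ ℓ} ⊕ Fin n) ℚ).toRingHom I₂ := by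
  exact stmt2' I₁ I₂ ℓ I hI
end

section
/- Let T be a directed tree on vertex set {0, 1, …, n−1} (n ≥ 2) such that from every vertex j ≥ 1 there is a directed path in T to vertex 0, with each edge i → j labeled by an indeterminate a_{ji}. Let T̃ be obtained from T by adding, for each edge i → j, a self-loop at vertex i labeled −a_{ji}. Define the (n−1) × (n−1) matrix 𝔅 whose (i,j) entry is the sum over all walks W of length i in T̃ from vertex j to vertex 0 of the product of edge labels along W. Then det 𝔅 is a nonzero polynomial in ℚ[a_{ji}]. -/
open BigOperators

/-- `walkSum L k s t` is the sum, over all walks of length `k` from `s` to `t` in the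
directed graph edge-labeled by `L` (where `L s t` is the label of the edge `s → t`,
label `0` meaning no edge), of the products of the edge labels along the walk. -/
def walkSum {V : Type*} [Fintype V] [DecidableEq V] {R : Type*} [CommRing R]
    (L : V → V → R) : ℕ → V → V → R
  | 0 => fun s t => if s = t then 1 else 0
  | (k + 1) => fun s t => ∑ w, L s w * walkSum L k w t

/-- The edge labels of the graph `T̃` obtained from the directed 0-tree with parent
function `parent` (edges `i → parent i` for `i ≠ 0`, labeled by the indeterminate
`a_{parent i, i} = X (parent i, i)`) by adding at each vertex `i ≠ 0` a self-loop
labeled `−a_{parent i, i}`. -/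
noncomputable def treeLabels {n : ℕ} (root : Fin n) (parent : Fin n → Fin n) :
    Fin n → Fin n → MvPolynomial (Fin n × Fin n) ℚ := fun s t =>
  if s = root then 0
  else if t = s then -MvPolynomial.X (parent s, s)
  else if t = parent s then MvPolynomial.X (parent s, s)
  else 0

/-!
Specialize `a_{parent s, s}` to `c s` for natural weights `c` that are injective, vanish at the
root and strictly increase away from it. The walk sums become the entries `(L ^ (i+1)) j 0` of
the specialized rational matrix `L`, whose row `0` vanishes. For each vertex `w ≠ 0`, `L` has a
left eigenvector `y_w` for the eigenvalue `-c w`, supported on the path from `w` to the root,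
with `y_w 0 ≠ 0`. Multiplying the specialized `𝔅` by the matrix of these eigenvectors gives the
transposed Vandermonde matrix of the distinct eigenvalues times an invertible diagonal matrix,
so `det 𝔅` is nonzero already after specialization.
-/

open Function Matrix

lemma walkSum_eq_pow {V R : Type*} [Fintype V] [DecidableEq V] [CommRing R]
    (L : Matrix V V R) (k : ℕ) (s t : V) :
    walkSum (fun a b => L a b) k s t = (L ^ k) s t := by
  induction k generalizing s t with
  | zero => simp [walkSum, one_apply]
  | succ k ih => simp [walkSum, pow_succ', mul_apply, ih]

lemma map_walkSum {V R S : Type*} [Fintype V] [DecidableEq V] [CommRing R] [CommRing S]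
    (f : R →+* S) (L : V → V → R) (k : ℕ) (s t : V) :
    f (walkSum L k s t) = walkSum (fun a b => f (L a b)) k s t := by
  induction k generalizing s t with
  | zero => simp [walkSum, apply_ite f]
  | succ k ih => simp [walkSum, ih]

lemma vecMul_pow_of_vecMul_eq_smul {V R : Type*} [Fintype V] [DecidableEq V] [CommRing R]
    {L : Matrix V V R} {y : V → R} {μ : R} (hy : y ᵥ* L = μ • y) (k : ℕ) :
    y ᵥ* L ^ k = μ ^ k • y := by
  induction k with
  | zero => simp
  | succ k ih => rw [pow_succ, ← vecMul_vecMul, ih, smul_vecMul, hy, smul_smul, pow_succ]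

theorem det_krylov_ne_zero {V K : Type*} [Fintype V] [DecidableEq V] [Field K] {m : ℕ}
    {L : Matrix V V K} {r : V} {v : Fin m → V} (hv : Injective v)
    (hL : ∀ s ∉ Set.range v, L s = 0)
    {μ : Fin m → K} (hμ : Injective μ) (hμ0 : ∀ j, μ j ≠ 0) {y : Fin m → V → K}
    (hy : ∀ j, y j ᵥ* L = μ j • y j) (hyr : ∀ j, y j r ≠ 0) :
    (of fun i j : Fin m => (L ^ (i.val + 1)) (v j) r).det ≠ 0 := by
  -- pairing with the eigenvectors turns the Krylov matrix into a scaled Vandermonde matrix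
  have hpair : (of fun i j : Fin m => (L ^ (i.val + 1)) (v j) r) * of (fun j w => y w (v j)) =
      (vandermonde μ)ᵀ * diagonal fun w => μ w * y w r := by
    ext i w
    have hrow : ∀ s ∉ Set.range v, (L ^ (i.val + 1)) s r = 0 := fun s hs => by
      rw [pow_succ', mul_apply, Finset.sum_eq_zero fun x _ => by rw [hL s hs]; simp]
    have hfix := congrFun (vecMul_pow_of_vecMul_eq_smul (hy w) (i.val + 1)) r
    simp only [vecMul, dotProduct, Pi.smul_apply, smul_eq_mul] at hfix
    rw [mul_apply, mul_diagonal, transpose_apply, vandermonde_apply, ← mul_assoc, ← pow_succ,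
      ← hfix]
    exact Fintype.sum_of_injective v hv _ _ (fun s hs => by rw [hrow s hs, mul_zero])
      fun j => mul_comm _ _
  have hrhs : ((vandermonde μ)ᵀ * diagonal fun w => μ w * y w r).det ≠ 0 := by
    rw [det_mul, det_transpose, det_diagonal]
    exact mul_ne_zero (det_vandermonde_ne_zero_iff.mpr hμ)
      (Finset.prod_ne_zero_iff.mpr fun w _ => mul_ne_zero (hμ0 w) (hyr w))
  rw [← hpair, det_mul] at hrhs
  exact left_ne_zero_of_mul hrhs

section TreeMatrix

variable {V K : Type*} [DecidableEq V] [Field K] (r : V) (parent : V → V)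

/-- The specialization of `treeLabels` at `a_{parent s, s} = f s`. -/
def treeMatrix (f : V → K) : Matrix V V K :=
  of fun s t => if s = r then 0 else if t = s then -f s else if t = parent s then f s else 0

lemma treeMatrix_row_of_ne {f : V → K} {t : V} (ht : t ≠ r) (hpt : parent t ≠ t) :
    treeMatrix r parent f t = -f t • Pi.single t 1 + f t • Pi.single (parent t) 1 := by
  ext u
  by_cases hu : u = t
  · subst hu; simp [treeMatrix, ht, hpt.symm]
  · by_cases hup : u = parent t
    · subst hup; simp [treeMatrix, ht, hpt]
    · simp [treeMatrix, ht, hu, hup]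

variable [Fintype V] [CharZero K] {r parent} {c : V → ℕ}

/-- The vector is built along the path from `t` to the root: adding `e_t` to a multiple of the
vector for `parent t` cancels the error term at `parent t`, which is possible because the
weights decrease towards the root, so `c (parent t) ≠ m`. -/
theorem exists_vecMul_treeMatrix (hc_root : c r = 0) (hc : ∀ t, t ≠ r → c (parent t) < c t)
    (t : V) (m : ℕ) (hm : c t ≤ m) :
    ∃ y : V → K, y r ≠ 0 ∧ y ᵥ* treeMatrix r parent (fun s => (c s : K)) =
      -(m : K) • y + ((m : K) - c t) • Pi.single t 1 := by
  by_cases ht : t = r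
  · subst ht
    refine ⟨Pi.single t 1, by simp, ?_⟩
    ext u
    simp [treeMatrix, hc_root]
  · have hpt := hc t ht
    obtain ⟨y, hyr, hy⟩ := exists_vecMul_treeMatrix hc_root hc (parent t) m (by omega)
    have hden : (c (parent t) : K) - m ≠ 0 := sub_ne_zero.mpr (by exact_mod_cast (by omega))
    have hct : (c t : K) ≠ 0 := by exact_mod_cast (by omega)
    set α : K := c t / (c (parent t) - m)
    refine ⟨α • y + Pi.single t 1, ?_, ?_⟩
    · simpa [ht, α, hden, hct] using hyr
    · have hαden : α * ((m : K) - c (parent t)) = -c t := by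
        simp only [α]; field_simp; ring
      rw [add_vecMul, smul_vecMul, hy, single_one_vecMul, row,
        treeMatrix_row_of_ne r parent ht (fun h => by rw [h] at hpt; omega)]
      ext u
      simp only [Pi.add_apply, Pi.smul_apply, smul_eq_mul]
      linear_combination (Pi.single (parent t) 1 : V → K) u * hαden
termination_by c t
decreasing_by exact hpt

theorem exists_left_eigenvector_treeMatrix (hc_root : c r = 0)
    (hc : ∀ t, t ≠ r → c (parent t) < c t) (w : V) :
    ∃ y : V → K, y r ≠ 0 ∧
      y ᵥ* treeMatrix r parent (fun s => (c s : K)) = -(c w : K) • y := by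
  simpa using exists_vecMul_treeMatrix (K := K) hc_root hc w (c w) le_rfl

end TreeMatrix

section Depth

variable {V : Type*} [DecidableEq V] {r : V} {parent : V → V}

def rootDist (hroot : ∀ i, ∃ k, parent^[k] i = r) (t : V) : ℕ := Nat.find (hroot t)

variable (hroot : ∀ i, ∃ k, parent^[k] i = r)

lemma rootDist_root : rootDist hroot r = 0 := Nat.find_eq_zero _ |>.mpr rfl

lemma rootDist_eq_rootDist_parent_add_one {t : V} (ht : t ≠ r) :
    rootDist hroot t = rootDist hroot (parent t) + 1 :=
  Nat.find_comp_succ (hroot t) (hroot (parent t)) ht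

end Depth

lemma exists_injective_weight_parent_lt {n : ℕ} {r : Fin n} {parent : Fin n → Fin n}
    (hr : (r : ℕ) = 0) (hroot : ∀ i, ∃ k, parent^[k] i = r) :
    ∃ c : Fin n → ℕ, Injective c ∧ c r = 0 ∧ ∀ t, t ≠ r → c (parent t) < c t := by
  refine ⟨fun t => n * rootDist hroot t + t, fun s t hst => ?_, ?_, fun t ht => ?_⟩
  · have := congrArg (· % n) hst
    simpa [Nat.mul_add_mod, Nat.mod_eq_of_lt, Fin.ext_iff] using this
  · simp [rootDist_root, hr]
  · simp only [rootDist_eq_rootDist_parent_add_one hroot ht, Nat.mul_succ]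
    omega

lemma aeval_treeLabels {n : ℕ} (r : Fin n) (parent : Fin n → Fin n) (f : Fin n → ℚ)
    (s t : Fin n) :
    MvPolynomial.aeval (fun p : Fin n × Fin n => f p.2) (treeLabels r parent s t) =
      treeMatrix r parent f s t := by
  simp only [treeLabels, treeMatrix, of_apply]
  split_ifs <;> simp

/-- Lemma `lem:B`: let `T` be a directed 0-tree on `{0,…,n−1}` (`n ≥ 2`), with each
edge `i → j` labeled by the indeterminate `a_{ji}`, and let `T̃` be `T` together with
a self-loop at `i` labeled `−a_{ji}` for each edge `i → j`.  Let `𝔅` be the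
`(n−1) × (n−1)` matrix whose `(i,j)` entry is the sum, over all walks `W` of length
`i` in `T̃` from vertex `j` to vertex `0`, of the products `a^W` of the edge labels.
Then `det 𝔅` is a nonzero polynomial in `ℚ[a_{ji}]`. -/
theorem stmt7 {n : ℕ} (hn : 2 ≤ n) (parent : Fin n → Fin n)
    (hroot : ∀ i : Fin n, ∃ k : ℕ, parent^[k] i = ⟨0, by omega⟩)
    (𝔅 : Matrix (Fin (n - 1)) (Fin (n - 1)) (MvPolynomial (Fin n × Fin n) ℚ))
    (h𝔅 : ∀ i j : Fin (n - 1),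
      𝔅 i j = walkSum (treeLabels (⟨0, by omega⟩ : Fin n) parent) (i.val + 1) ⟨j.val + 1, by omega⟩ ⟨0, by omega⟩) :
    𝔅.det ≠ 0 := by
  set r : Fin n := ⟨0, by omega⟩
  obtain ⟨c, hc_inj, hc_root, hc⟩ := exists_injective_weight_parent_lt rfl hroot
  set L := treeMatrix r parent fun s => (c s : ℚ)
  set φ := MvPolynomial.aeval (R := ℚ) fun p : Fin n × Fin n => (c p.2 : ℚ)
  set v : Fin (n - 1) → Fin n := fun j => ⟨j.val + 1, by omega⟩
  have hv : Injective v := fun i j h => Fin.ext (by simpa [v, Fin.ext_iff] using h)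
  have hB : φ.mapMatrix 𝔅 = of fun i j => (L ^ (i.val + 1)) (v j) r := by
    ext i j
    have hlabels : (fun a b => φ (treeLabels r parent a b)) = fun a b => L a b :=
      funext₂ (aeval_treeLabels r parent fun s => (c s : ℚ))
    rw [AlgHom.mapMatrix_apply, map_apply, h𝔅, ← AlgHom.coe_toRingHom, map_walkSum]
    exact (congrArg (walkSum · _ _ _) hlabels).trans (walkSum_eq_pow L _ _ _)
  have hL : ∀ s ∉ Set.range v, L s = 0 := fun s hs => by
    obtain rfl : s = r := Fin.ext <| show s.val = 0 from by_contra fun hs0 =>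
      hs ⟨⟨s.val - 1, by omega⟩, Fin.ext (by simp only [v]; omega)⟩
    ext t
    simp [L, treeMatrix]
  have hμ0 : ∀ j, -(c (v j) : ℚ) ≠ 0 := fun j => by
    simpa using Nat.ne_zero_of_lt (hc (v j) fun h => by simp [v, r, Fin.ext_iff] at h)
  choose y hyr hy using fun j => exists_left_eigenvector_treeMatrix (K := ℚ) hc_root hc (v j)
  have hkrylov :=
    det_krylov_ne_zero hv hL (fun i j h => hv (hc_inj (by simpa using h))) hμ0 hy hyr
  rw [← hB, ← AlgHom.map_det] at hkrylov
  exact fun h => hkrylov (by rw [h, map_zero])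
end

section
/- For the mass-action system of the network {A+B → 0, 3A → 4A+B} ∪ {A+B → 2A, 3A+2B → 2A+3B} glued over the shared complex A+B, with positive rate constants κ₁ (A+B → 0), κ₂ (3A → 4A+B), κ₃ (A+B → 2A), κ₄ (3A+2B → 2A+3B), the system has at most one positive steady state in each stoichiometric compatibility class for each choice of positive rate constants. -/
/-- For the network `{0 ← A+B → 2A, 3A → 4A+B, 3A+2B → 2A+3B}` (obtained by gluing
`{A+B → 0, 3A → 4A+B}` and `{A+B → 2A, 3A+2B → 2A+3B}` over the shared complex `A+B`),
with positive rate constants `κ₀ (A+B→0)`, `κ₂ (3A→4A+B)`, `κ₃ (A+B→2A)`,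
`κ₄ (3A+2B→2A+3B)`, the mass-action system
`a' = −κ₀ a b + κ₂ a³ + κ₃ a b − κ₄ a³ b²`,
`b' = −κ₀ a b + κ₂ a³ − κ₃ a b + κ₄ a³ b²`
has at most one positive steady state in each stoichiometric compatibility class
(the stoichiometric subspace being spanned by the reaction vectors
`(−1,−1), (1,−1), (1,1), (−1,1)`). -/
theorem stmt16 (κ₀ κ₂ κ₃ κ₄ : ℝ) (h₀ : 0 < κ₀) (h₂ : 0 < κ₂) (h₃ : 0 < κ₃)
    (h₄ : 0 < κ₄) (a b a' b' : ℝ)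
    (ha : 0 < a) (hb : 0 < b) (ha' : 0 < a') (hb' : 0 < b')
    (hss1 : -κ₀ * a * b + κ₂ * a ^ 3 + κ₃ * a * b - κ₄ * a ^ 3 * b ^ 2 = 0)
    (hss2 : -κ₀ * a * b + κ₂ * a ^ 3 - κ₃ * a * b + κ₄ * a ^ 3 * b ^ 2 = 0)
    (hss1' : -κ₀ * a' * b' + κ₂ * a' ^ 3 + κ₃ * a' * b' - κ₄ * a' ^ 3 * b' ^ 2 = 0)
    (hss2' : -κ₀ * a' * b' + κ₂ * a' ^ 3 - κ₃ * a' * b' + κ₄ * a' ^ 3 * b' ^ 2 = 0)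
    (hcompat : ![a - a', b - b'] ∈ Submodule.span ℝ
      ({![(-1 : ℝ), -1], ![1, -1], ![1, 1], ![-1, 1]} : Set (Fin 2 → ℝ))) :
    a = a' ∧ b = b' := by
  -- From sum and difference of steady-state equations:
  have e1 : κ₀ * b = κ₂ * a ^ 2 := by
    have h := mul_pos ha hb
    nlinarith [hss1, hss2]
  have e2 : κ₃ = κ₄ * a ^ 2 * b := by
    have h := mul_pos ha hb
    nlinarith [hss1, hss2]
  have e1' : κ₀ * b' = κ₂ * a' ^ 2 := by
    have h := mul_pos ha' hb'
    nlinarith [hss1', hss2']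
  have e2' : κ₃ = κ₄ * a' ^ 2 * b' := by
    have h := mul_pos ha' hb'
    nlinarith [hss1', hss2']
  have key : κ₂ * κ₄ * a ^ 4 = κ₀ * κ₃ := by
    calc κ₂ * κ₄ * a ^ 4 = κ₄ * a ^ 2 * (κ₂ * a ^ 2) := by ring
      _ = κ₄ * a ^ 2 * (κ₀ * b) := by rw [e1]
      _ = κ₀ * κ₃ := by rw [e2]; ring
  have key' : κ₂ * κ₄ * a' ^ 4 = κ₀ * κ₃ := by
    calc κ₂ * κ₄ * a' ^ 4 = κ₄ * a' ^ 2 * (κ₂ * a' ^ 2) := by ring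
      _ = κ₄ * a' ^ 2 * (κ₀ * b') := by rw [e1']
      _ = κ₀ * κ₃ := by rw [e2']; ring
  have h4 : a ^ 4 = a' ^ 4 :=
    mul_left_cancel₀ (ne_of_gt (mul_pos h₂ h₄)) (key.trans key'.symm)
  have haa : a = a' :=
    (pow_left_strictMonoOn₀ (four_ne_zero)).injOn ha.le ha'.le h4
  refine ⟨haa, ?_⟩
  have h5 : κ₀ * b = κ₀ * b' := by rw [e1, e1', haa]
  exact mul_left_cancel₀ (ne_of_gt h₀) h5
end
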